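/- arXiv:1104.1902 — 3 statements merged into one kernel-verified Lean document; each statement's English description precedes it below -/
import Mathlib

section
/- A numerical semigroup S with multiplicity m is m-irreducible if and only if its genus g(S) belongs to the set {m-1, m, ⌈(F(S)+1)/2⌉}. -/
/-- A numerical semigroup: a subset of ℕ containing 0, closed under addition,
with finite complement. -/
def IsNumSgp (S : Set ℕ) : Prop :=
  0 ∈ S ∧ (∀ a ∈ S, ∀ b ∈ S, a + b ∈ S) ∧ (Sᶜ).Finite

/-- Multiplicity: least positive element. -/
noncomputable def nsMult (S : Set ℕ) : ℕ := sInf {n | n ∈ S ∧ 0 < n}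

/-- Frobenius number: largest integer not in S. -/
noncomputable def nsFrob (S : Set ℕ) : ℕ := sSup Sᶜ

/-- Genus: number of gaps. -/
noncomputable def nsGenus (S : Set ℕ) : ℕ := Sᶜ.ncard

/-- Special gaps of S. -/
def nsSG (S : Set ℕ) : Set ℕ := {h | h ∉ S ∧ IsNumSgp (S ∪ {h})}

/-- Special gaps of S larger than m. -/
def nsSGm (m : ℕ) (S : Set ℕ) : Set ℕ := {h ∈ nsSG S | m < h}

/-- S is irreducible: not an intersection of two numerical semigroups properly containing it. -/
def nsIrr (S : Set ℕ) : Prop :=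
  ¬ ∃ T₁ T₂ : Set ℕ, IsNumSgp T₁ ∧ IsNumSgp T₂ ∧ S ⊂ T₁ ∧ S ⊂ T₂ ∧ S = T₁ ∩ T₂

/-- S is m-irreducible: not an intersection of two numerical semigroups of
multiplicity m properly containing it. -/
def nsMIrr (m : ℕ) (S : Set ℕ) : Prop :=
  ¬ ∃ T₁ T₂ : Set ℕ, IsNumSgp T₁ ∧ IsNumSgp T₂ ∧ nsMult T₁ = m ∧ nsMult T₂ = m ∧
      S ⊂ T₁ ∧ S ⊂ T₂ ∧ S = T₁ ∩ T₂

/-- Symmetric: irreducible with odd Frobenius number. -/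
def nsSym (S : Set ℕ) : Prop := nsIrr S ∧ Odd (nsFrob S)

/-- Pseudosymmetric: irreducible with even Frobenius number. -/
def nsPseudoSym (S : Set ℕ) : Prop := nsIrr S ∧ Even (nsFrob S)

/-- m-symmetric: m-irreducible with odd Frobenius number. -/
def nsMSym (m : ℕ) (S : Set ℕ) : Prop := nsMIrr m S ∧ Odd (nsFrob S)

/-- m-pseudosymmetric: m-irreducible with even Frobenius number. -/
def nsMPseudoSym (m : ℕ) (S : Set ℕ) : Prop := nsMIrr m S ∧ Even (nsFrob S)

/-- The numerical semigroup (submonoid) generated by a set of naturals. -/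
def nsGen (A : Set ℕ) : Set ℕ := (AddSubmonoid.closure A : Set ℕ)

/-- Apéry element: least element of S congruent to i mod m. -/
noncomputable def nsApery (S : Set ℕ) (m i : ℕ) : ℕ := sInf {s | s ∈ S ∧ s % m = i % m}

/-! The largest element of `T \ S`, for a numerical semigroup `T ⊋ S`, is a special gap of `S`
(a gap `h` such that `S ∪ {h}` is again a numerical semigroup), and it exceeds `m` when `T` has
multiplicity `m`. Hence `S` is `m`-irreducible iff it has at most one special gap above `m`.

The gaps of `S` are `1, …, m - 1` together with the gaps above `m`, so `g ≤ m` means at most one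
gap above `m`. Reflecting `x ↦ F - x` gives `2 g = F + 1 + #{x | x and F - x are gaps}`, and a
special gap `h ≠ F` produces two such gaps `h ≠ F - h`; so `g = ⌈(F + 1) / 2⌉` leaves `F` as the
only special gap. Conversely, if `g > m` and `g ≠ ⌈(F + 1) / 2⌉`: when `F < 2 m` every gap above
`m` is special, and when `F > 2 m` the largest `x` with `x`, `F - x` gaps and `2 x ≠ F` is a
special gap above `m` other than `F`. -/

variable {S T : Set ℕ}

theorem IsNumSgp.exists_pos_mem (hS : IsNumSgp S) : ∃ n ∈ S, 0 < n := by
  obtain ⟨N, hN⟩ := hS.2.2.bddAbove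
  refine ⟨N + 1, ?_, N.succ_pos⟩
  by_contra h
  exact (hN h).not_gt N.lt_succ_self

theorem IsNumSgp.nsMult_mem (hS : IsNumSgp S) : nsMult S ∈ S :=
  (Nat.sInf_mem hS.exists_pos_mem).1

theorem IsNumSgp.nsMult_pos (hS : IsNumSgp S) : 0 < nsMult S :=
  (Nat.sInf_mem hS.exists_pos_mem).2

theorem nsMult_le {n : ℕ} (hn : n ∈ S) (hn0 : 0 < n) : nsMult S ≤ n :=
  Nat.sInf_le ⟨hn, hn0⟩

theorem IsNumSgp.le_nsFrob (hS : IsNumSgp S) {x : ℕ} (hx : x ∉ S) : x ≤ nsFrob S :=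
  le_csSup hS.2.2.bddAbove hx

theorem IsNumSgp.mem_of_nsFrob_lt (hS : IsNumSgp S) {x : ℕ} (hx : nsFrob S < x) : x ∈ S :=
  by_contra fun h ↦ (hS.le_nsFrob h).not_gt hx

theorem IsNumSgp.nsFrob_notMem (hS : IsNumSgp S) (hne : Sᶜ.Nonempty) : nsFrob S ∉ S :=
  Nat.sSup_mem hne hS.2.2.bddAbove

theorem IsNumSgp.mem_nsSG_iff (hS : IsNumSgp S) {h : ℕ} :
    h ∈ nsSG S ↔ h ∉ S ∧ h + h ∈ S ∧ ∀ s ∈ S, 0 < s → h + s ∈ S := by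
  constructor
  · rintro ⟨hh, hT⟩
    have h0 : h ≠ 0 := fun h0 ↦ hh (h0 ▸ hS.1)
    refine ⟨hh, ?_, fun s hs hs0 ↦ ?_⟩
    · rcases hT.2.1 h (Or.inr rfl) h (Or.inr rfl) with h2 | h2
      · exact h2
      · exact absurd (Set.mem_singleton_iff.mp h2) (by omega)
    · rcases hT.2.1 h (Or.inr rfl) s (Or.inl hs) with h2 | h2
      · exact h2
      · exact absurd (Set.mem_singleton_iff.mp h2) (by omega)
  · rintro ⟨hh, h2, hadd⟩
    have hadd' : ∀ s ∈ S, h + s ∈ S ∪ {h} := fun s hs ↦ by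
      rcases Nat.eq_zero_or_pos s with rfl | hs0
      · exact Or.inr rfl
      · exact Or.inl (hadd s hs hs0)
    refine ⟨hh, Or.inl hS.1, ?_, hS.2.2.subset (Set.compl_subset_compl.mpr Set.subset_union_left)⟩
    rintro a (ha | rfl) b (hb | rfl)
    · exact Or.inl (hS.2.1 a ha b hb)
    · exact add_comm a b ▸ hadd' a ha
    · exact hadd' b hb
    · exact Or.inl h2

theorem IsNumSgp.nsFrob_mem_nsSG (hS : IsNumSgp S) (hne : Sᶜ.Nonempty) : nsFrob S ∈ nsSG S := by
  have hF := hS.nsFrob_notMem hne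
  have hF0 : 0 < nsFrob S := Nat.pos_of_ne_zero fun h0 ↦ hF (h0 ▸ hS.1)
  exact hS.mem_nsSG_iff.mpr ⟨hF, hS.mem_of_nsFrob_lt (by omega),
    fun s _ hs0 ↦ hS.mem_of_nsFrob_lt (by omega)⟩

theorem IsNumSgp.mem_nsSG_of_nsFrob_lt_add_nsMult (hS : IsNumSgp S) {x : ℕ} (hx : x ∉ S)
    (hmx : nsMult S ≤ x) (hF : nsFrob S < x + nsMult S) : x ∈ nsSG S :=
  hS.mem_nsSG_iff.mpr ⟨hx, hS.mem_of_nsFrob_lt (by omega),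
    fun s hs hs0 ↦ hS.mem_of_nsFrob_lt (by have := nsMult_le hs hs0; omega)⟩

theorem IsNumSgp.nsMult_union_singleton (hS : IsNumSgp S) {h : ℕ} (hh : nsMult S < h) :
    nsMult (S ∪ {h}) = nsMult S := by
  refine le_antisymm (nsMult_le (Or.inl hS.nsMult_mem) hS.nsMult_pos) ?_
  refine le_csInf ⟨h, Or.inr rfl, by omega⟩ ?_
  rintro n ⟨hn | rfl, hn0⟩
  exacts [nsMult_le hn hn0, hh.le]

theorem IsNumSgp.exists_mem_nsSGm_of_ssubset (hS : IsNumSgp S) (hT : IsNumSgp T) (hST : S ⊂ T)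
    (hmT : nsMult T ∈ S) : ∃ h ∈ T, h ∈ nsSGm (nsMult T) S := by
  have hfin : (T \ S).Finite := hS.2.2.subset fun x hx ↦ hx.2
  set h := sSup (T \ S)
  have hmem : h ∈ T \ S := Nat.sSup_mem (Set.nonempty_of_ssubset hST) hfin.bddAbove
  have habove : ∀ x ∈ T, h < x → x ∈ S := fun x hx hlt ↦
    by_contra fun hxS ↦ (le_csSup hfin.bddAbove ⟨hx, hxS⟩).not_gt hlt
  have h0 : 0 < h := Nat.pos_of_ne_zero fun h0 ↦ hmem.2 (h0 ▸ hS.1)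
  have hmh : nsMult T ≤ h := nsMult_le hmem.1 h0
  have hne : nsMult T ≠ h := fun he ↦ hmem.2 (he ▸ hmT)
  refine ⟨h, hmem.1, hS.mem_nsSG_iff.mpr ⟨hmem.2, ?_, fun s hs hs0 ↦ ?_⟩, by omega⟩
  · exact habove _ (hT.2.1 h hmem.1 h hmem.1) (by omega)
  · exact habove _ (hT.2.1 h hmem.1 s (hST.1 hs)) (by omega)

theorem IsNumSgp.nsMIrr_nsMult_iff (hS : IsNumSgp S) :
    nsMIrr (nsMult S) S ↔ (nsSGm (nsMult S) S).Subsingleton := by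
  constructor
  · intro hirr h₁ hh₁ h₂ hh₂
    by_contra hne
    refine hirr ⟨S ∪ {h₁}, S ∪ {h₂}, hh₁.1.2, hh₂.1.2, hS.nsMult_union_singleton hh₁.2,
      hS.nsMult_union_singleton hh₂.2, ?_, ?_, ?_⟩
    · exact Set.union_singleton ▸ Set.ssubset_insert hh₁.1.1
    · exact Set.union_singleton ▸ Set.ssubset_insert hh₂.1.1
    · rw [← Set.union_inter_distrib_left,
        Set.singleton_inter_eq_empty.mpr (Set.notMem_singleton_iff.mpr hne), Set.union_empty]
  · rintro hsub ⟨T₁, T₂, hT₁, hT₂, hm₁, hm₂, hs₁, hs₂, hS₁₂⟩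
    obtain ⟨h₁, hT₁h, hh₁⟩ := hS.exists_mem_nsSGm_of_ssubset hT₁ hs₁ (hm₁ ▸ hS.nsMult_mem)
    obtain ⟨h₂, hT₂h, hh₂⟩ := hS.exists_mem_nsSGm_of_ssubset hT₂ hs₂ (hm₂ ▸ hS.nsMult_mem)
    rw [hm₁] at hh₁
    rw [hm₂] at hh₂
    exact hh₁.1.1 (hS₁₂ ▸ ⟨hT₁h, hsub hh₁ hh₂ ▸ hT₂h⟩)

theorem IsNumSgp.nsGenus_eq (hS : IsNumSgp S) :
    nsGenus S = nsMult S - 1 + {x | x ∉ S ∧ nsMult S < x}.ncard := by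
  have hm0 := hS.nsMult_pos
  have hgaps : Sᶜ = Set.Icc 1 (nsMult S - 1) ∪ {x | x ∉ S ∧ nsMult S < x} := by
    ext x
    constructor
    · intro hx
      have h0 : x ≠ 0 := fun h0 ↦ hx (h0 ▸ hS.1)
      have hxm : x ≠ nsMult S := fun hxm ↦ hx (hxm ▸ hS.nsMult_mem)
      by_cases hlt : nsMult S < x
      · exact Or.inr ⟨hx, hlt⟩
      · exact Or.inl ⟨by omega, by omega⟩
    · rintro (⟨h1, h2⟩ | ⟨hx, -⟩)
      · exact fun hx ↦ by have := nsMult_le hx (by omega); omega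
      · exact hx
  have hdisj : Disjoint (Set.Icc 1 (nsMult S - 1)) {x | x ∉ S ∧ nsMult S < x} :=
    Set.disjoint_left.mpr fun x hx hx' ↦ by have := hx.2; have := hx'.2; omega
  rw [nsGenus, hgaps, Set.ncard_union_eq hdisj (Set.finite_Icc _ _)
    (hS.2.2.subset fun _ hx ↦ hx.1), Set.ncard_Icc_nat]
  omega

def nsPairedGaps (S : Set ℕ) : Set ℕ := {x | x ∉ S ∧ nsFrob S - x ∉ S}

theorem IsNumSgp.nsPairedGaps_finite (hS : IsNumSgp S) : (nsPairedGaps S).Finite :=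
  hS.2.2.subset fun _ hx ↦ hx.1

theorem IsNumSgp.two_mul_nsGenus (hS : IsNumSgp S) (hne : Sᶜ.Nonempty) :
    2 * nsGenus S = nsFrob S + 1 + (nsPairedGaps S).ncard := by
  have hF := hS.nsFrob_notMem hne
  set F := nsFrob S
  set R := {x | x ≤ F ∧ F - x ∉ S}
  have hR : Sᶜ.ncard = R.ncard := by
    refine Set.ncard_congr (fun x _ ↦ F - x) (fun x hx ↦ ?_) (fun x y hx hy hxy ↦ ?_)
      (fun y hy ↦ ⟨F - y, hy.2, by have := hy.1; omega⟩)
    · exact ⟨Nat.sub_le F x, by rwa [Nat.sub_sub_self (hS.le_nsFrob hx)]⟩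
    · have := hS.le_nsFrob hx; have := hS.le_nsFrob hy; omega
  have hunion : Sᶜ ∪ R = Set.Iic F := by
    ext x
    refine ⟨fun hx ↦ hx.elim hS.le_nsFrob And.left, fun hxF ↦ ?_⟩
    by_cases hxS : x ∈ S
    · refine Or.inr ⟨hxF, fun hFx ↦ hF ?_⟩
      simpa [Nat.add_sub_cancel' (Set.mem_Iic.mp hxF)] using hS.2.1 x hxS _ hFx
    · exact Or.inl hxS
  have hinter : Sᶜ ∩ R = nsPairedGaps S := by
    ext x
    exact ⟨fun ⟨hx, _, hFx⟩ ↦ ⟨hx, hFx⟩, fun ⟨hx, hFx⟩ ↦ ⟨hx, hS.le_nsFrob hx, hFx⟩⟩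
  have hcount := Set.ncard_union_add_ncard_inter Sᶜ R hS.2.2
    ((Set.finite_Iic F).subset fun _ hx ↦ hx.1)
  rw [hunion, hinter, Set.ncard_Iic_nat, ← hR] at hcount
  rw [nsGenus]
  omega

theorem IsNumSgp.nsSG_subsingleton_of_nsGenus_eq (hS : IsNumSgp S)
    (hg : nsGenus S = (nsFrob S + 2) / 2) : (nsSG S).Subsingleton := by
  suffices ∀ h ∈ nsSG S, h = nsFrob S from fun a ha b hb ↦ (this a ha).trans (this b hb).symm
  intro h hh
  obtain ⟨hhS, h2, hadd⟩ := hS.mem_nsSG_iff.mp hh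
  have hF := hS.nsFrob_notMem ⟨h, hhS⟩
  have hhF := hS.le_nsFrob hhS
  set F := nsFrob S
  by_contra hne
  have hFh : F - h ∉ S := fun hc ↦ hF (Nat.add_sub_cancel' hhF ▸ hadd _ hc (by omega))
  have hpairs : 1 < (nsPairedGaps S).ncard := by
    refine (Set.one_lt_ncard hS.nsPairedGaps_finite).mpr
      ⟨h, ⟨hhS, hFh⟩, F - h, ⟨hFh, by rwa [Nat.sub_sub_self hhF]⟩, fun he ↦ hF ?_⟩
    rwa [show F = h + h by omega]
  have := hS.two_mul_nsGenus ⟨h, hhS⟩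
  omega

theorem IsNumSgp.exists_mem_nsSG_ne_nsFrob (hS : IsNumSgp S)
    (hpairs : 1 < (nsPairedGaps S).ncard) :
    ∃ h ∈ nsSG S, h ≠ nsFrob S ∧ nsFrob S < h + h := by
  set F := nsFrob S
  set B := {x ∈ nsPairedGaps S | x + x ≠ F}
  have hB : B.Nonempty := by
    obtain ⟨x, y, hx, hy, hxy⟩ := (Set.one_lt_ncard_iff hS.nsPairedGaps_finite).mp hpairs
    by_cases hxF : x + x = F
    · exact ⟨y, hy, by omega⟩
    · exact ⟨x, hx, hxF⟩
  obtain ⟨h, ⟨⟨hhS, hFh⟩, hh2⟩, hmax⟩ :=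
    Set.exists_max_image B id (hS.nsPairedGaps_finite.subset fun _ hx ↦ hx.1) hB
  have hhF := hS.le_nsFrob hhS
  have hlt : F < h + h := by
    have : F - h ≤ h := hmax (F - h) ⟨⟨hFh, by rwa [Nat.sub_sub_self hhF]⟩, by omega⟩
    omega
  refine ⟨h, hS.mem_nsSG_iff.mpr ⟨hhS, hS.mem_of_nsFrob_lt hlt, fun s hs hs0 ↦ ?_⟩,
    fun he ↦ hFh (by rw [he, Nat.sub_self]; exact hS.1), hlt⟩
  by_contra hhs
  have hhsF := hS.le_nsFrob hhs
  have hFhs : F - (h + s) ∉ S := fun hc ↦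
    hFh (show F - (h + s) + s = F - h by omega ▸ hS.2.1 _ hc s hs)
  have : h + s ≤ h := hmax (h + s) ⟨⟨hhs, hFhs⟩, by omega⟩
  omega

theorem IsNumSgp.nsSGm_nontrivial (hS : IsNumSgp S)
    (hgaps : 1 < {x | x ∉ S ∧ nsMult S < x}.ncard) (hg : nsGenus S ≠ (nsFrob S + 2) / 2) :
    (nsSGm (nsMult S) S).Nontrivial := by
  obtain ⟨x, y, ⟨hxS, hmx⟩, ⟨hyS, hmy⟩, hxy⟩ :=
    (Set.one_lt_ncard_iff (hS.2.2.subset fun _ hx ↦ hx.1)).mp hgaps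
  have hne : Sᶜ.Nonempty := ⟨x, hxS⟩
  have hxF := hS.le_nsFrob hxS
  have hF2m : nsFrob S ≠ nsMult S + nsMult S := fun he ↦
    hS.nsFrob_notMem hne (he ▸ hS.2.1 _ hS.nsMult_mem _ hS.nsMult_mem)
  rcases lt_or_gt_of_ne hF2m with hF | hF
  · exact ⟨x, ⟨hS.mem_nsSG_of_nsFrob_lt_add_nsMult hxS hmx.le (by omega), hmx⟩,
      y, ⟨hS.mem_nsSG_of_nsFrob_lt_add_nsMult hyS hmy.le (by omega), hmy⟩, hxy⟩
  · have hpairs : 1 < (nsPairedGaps S).ncard := by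
      have := hS.two_mul_nsGenus hne
      omega
    obtain ⟨h, hh, hhF, hlt⟩ := hS.exists_mem_nsSG_ne_nsFrob hpairs
    exact ⟨h, ⟨hh, by omega⟩, nsFrob S, ⟨hS.nsFrob_mem_nsSG hne, by omega⟩, hhF⟩

/-- S with multiplicity m is m-irreducible iff
g(S) ∈ {m-1, m, ⌈(F(S)+1)/2⌉}. -/
theorem stmt1 (m : ℕ) (S : Set ℕ) (hS : IsNumSgp S) (hm : nsMult S = m) :
    nsMIrr m S ↔ nsGenus S ∈ ({m - 1, m, (nsFrob S + 2) / 2} : Set ℕ) := by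
  subst hm
  have hgenus := hS.nsGenus_eq
  have hm0 := hS.nsMult_pos
  have hgaps_fin : {x | x ∉ S ∧ nsMult S < x}.Finite := hS.2.2.subset fun _ hx ↦ hx.1
  rw [hS.nsMIrr_nsMult_iff, Set.mem_insert_iff, Set.mem_insert_iff, Set.mem_singleton_iff]
  constructor
  · intro hsub
    by_contra! hg
    exact (hS.nsSGm_nontrivial (by omega) hg.2.2).not_subsingleton hsub
  · intro hg
    obtain hle | heq : nsGenus S ≤ nsMult S ∨ nsGenus S = (nsFrob S + 2) / 2 := by omega
    · exact Set.Subsingleton.anti ((Set.ncard_le_one hgaps_fin).mp (by omega))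
        fun h hh ↦ ⟨hh.1.1, hh.2⟩
    · exact (hS.nsSG_subsingleton_of_nsGenus_eq heq).anti fun h hh ↦ hh.1
end

section
/- A numerical semigroup S with multiplicity m is m-irreducible if and only if the set SG_m(S) of special gaps of S larger than m has at most one element; moreover SG_m(S) is empty if and only if S = {0, m, m+1, m+2, ...}. -/
/-!
A semigroup `T ⊋ S` of the same multiplicity `m` always contains a special gap of `S` larger
than `m`, namely `max (T \ S)`. Hence two such semigroups with `T₁ ∩ T₂ = S` need two distinct
elements of `SG_m(S)`; conversely, two distinct `h₁, h₂ ∈ SG_m(S)` give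
`S = (S ∪ {h₁}) ∩ (S ∪ {h₂})`. Applied to `T = {0, m, m+1, …}` the same fact shows that
`SG_m(S) = ∅` forces `S = T`.
-/

lemma nsMult_le_of_mem {S : Set ℕ} {n : ℕ} (hn : n ∈ S) (hpos : 0 < n) : nsMult S ≤ n :=
  Nat.sInf_le ⟨hn, hpos⟩

lemma subset_ordinary (S : Set ℕ) : S ⊆ {0} ∪ {n : ℕ | nsMult S ≤ n} := by
  intro n hn
  rcases Nat.eq_zero_or_pos n with rfl | hpos
  · exact Or.inl rfl
  · exact Or.inr (nsMult_le_of_mem hn hpos)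

lemma isNumSgp_ordinary (m : ℕ) : IsNumSgp ({0} ∪ {n : ℕ | m ≤ n}) := by
  refine ⟨Or.inl rfl, ?_, (Set.finite_Iio m).subset ?_⟩
  · rintro a (ha | ha) b (hb | hb) <;>
      simp only [Set.mem_union, Set.mem_singleton_iff, Set.mem_ofPred_eq] at ha hb ⊢ <;> omega
  · intro n hn
    simp only [Set.mem_compl_iff, Set.mem_union, Set.mem_singleton_iff, Set.mem_ofPred_eq,
      not_or, not_le] at hn
    exact hn.2

lemma nsMult_ordinary {m : ℕ} (hm : 0 < m) : nsMult ({0} ∪ {n : ℕ | m ≤ n}) = m := by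
  have hmem : m ∈ ({0} ∪ {n : ℕ | m ≤ n}) := Or.inr (le_refl m)
  refine le_antisymm (nsMult_le_of_mem hmem hm) (le_csInf ⟨m, hmem, hm⟩ ?_)
  rintro n ⟨hn | hn, hpos⟩
  · exact absurd hn hpos.ne'
  · exact hn

namespace IsNumSgp

variable {S : Set ℕ}

lemma nsMult_mem_and_pos (hS : IsNumSgp S) : nsMult S ∈ S ∧ 0 < nsMult S := by
  obtain ⟨n, hn, hpos⟩ := (by simpa using hS.2.2.infinite_compl : S.Infinite).exists_gt 0
  exact Nat.sInf_mem (s := {n | n ∈ S ∧ 0 < n}) ⟨n, hn, hpos⟩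

lemma nsMult_union_singleton_s2 (hS : IsNumSgp S) {h : ℕ} (hh : nsMult S < h) :
    nsMult (S ∪ {h}) = nsMult S := by
  obtain ⟨hmS, hmpos⟩ := hS.nsMult_mem_and_pos
  refine le_antisymm (nsMult_le_of_mem (Or.inl hmS) hmpos) (le_csInf ⟨_, Or.inl hmS, hmpos⟩ ?_)
  rintro n ⟨hn | rfl, hpos⟩
  · exact nsMult_le_of_mem hn hpos
  · exact hh.le

lemma union_singleton_of_add_mem (hS : IsNumSgp S) {h : ℕ} (hadd : ∀ s ∈ S, 0 < s → s + h ∈ S)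
    (hdouble : h + h ∈ S) : IsNumSgp (S ∪ {h}) := by
  have hadd' : ∀ s ∈ S, s + h ∈ S ∪ {h} := fun s hs => by
    rcases Nat.eq_zero_or_pos s with rfl | hpos
    · exact Or.inr (zero_add h)
    · exact Or.inl (hadd s hs hpos)
  refine ⟨Or.inl hS.1, ?_, hS.2.2.subset (Set.compl_subset_compl.mpr Set.subset_union_left)⟩
  rintro a (ha | rfl) b (hb | rfl)
  · exact Or.inl (hS.2.1 a ha b hb)
  · exact hadd' a ha
  · exact add_comm b a ▸ hadd' b hb
  · exact Or.inl hdouble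

lemma sSup_sdiff_mem_nsSG (hS : IsNumSgp S) {T : Set ℕ} (hT : IsNumSgp T) (hST : S ⊂ T) :
    sSup (T \ S) ∈ T \ S ∧ sSup (T \ S) ∈ nsSG S := by
  have hbdd : BddAbove (T \ S) := (hS.2.2.subset fun _ hx => hx.2).bddAbove
  obtain ⟨hgT, hgS⟩ : sSup (T \ S) ∈ T \ S := Nat.sSup_mem (Set.nonempty_of_ssubset hST) hbdd
  set g := sSup (T \ S)
  have habove : ∀ x ∈ T, g < x → x ∈ S := fun x hxT hgx => by
    by_contra hxS
    exact (le_csSup hbdd ⟨hxT, hxS⟩).not_gt hgx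
  have hgpos : 0 < g := Nat.pos_of_ne_zero fun h0 => hgS (h0 ▸ hS.1)
  refine ⟨⟨hgT, hgS⟩, hgS, hS.union_singleton_of_add_mem (fun s hs hpos => ?_) ?_⟩
  · exact habove _ (hT.2.1 s (hST.subset hs) g hgT) (by omega)
  · exact habove _ (hT.2.1 g hgT g hgT) (by omega)

lemma exists_mem_nsSGm_of_ssubset_s2 (hS : IsNumSgp S) {T : Set ℕ} (hT : IsNumSgp T)
    (hST : S ⊂ T) (hmS : nsMult T ∈ S) : ∃ h ∈ nsSGm (nsMult T) S, h ∈ T := by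
  obtain ⟨⟨hgT, hgS⟩, hgSG⟩ := hS.sSup_sdiff_mem_nsSG hT hST
  have hgpos : 0 < sSup (T \ S) := Nat.pos_of_ne_zero fun h0 => hgS (h0 ▸ hS.1)
  have hmg : nsMult T < sSup (T \ S) :=
    (nsMult_le_of_mem hgT hgpos).lt_of_ne fun h => hgS (h ▸ hmS)
  exact ⟨_, ⟨hgSG, hmg⟩, hgT⟩

end IsNumSgp

/-- S with multiplicity m is m-irreducible iff SG_m(S) has at most
one element; and SG_m(S) = ∅ iff S = {0, m, m+1, ...}. -/
theorem stmt2 (m : ℕ) (S : Set ℕ) (hS : IsNumSgp S) (hm : nsMult S = m) :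
    (nsMIrr m S ↔ (nsSGm m S).Subsingleton) ∧
    (nsSGm m S = ∅ ↔ S = {0} ∪ {n : ℕ | m ≤ n}) := by
  subst hm
  obtain ⟨hmS, hmpos⟩ := hS.nsMult_mem_and_pos
  refine ⟨⟨fun hirr h₁ hh₁ h₂ hh₂ => ?_, ?_⟩, ⟨fun hempty => ?_, ?_⟩⟩
  · by_contra hne
    refine hirr ⟨S ∪ {h₁}, S ∪ {h₂}, hh₁.1.2, hh₂.1.2, hS.nsMult_union_singleton_s2 hh₁.2,
      hS.nsMult_union_singleton_s2 hh₂.2, ?_, ?_, ?_⟩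
    · exact Set.union_singleton ▸ Set.ssubset_insert hh₁.1.1
    · exact Set.union_singleton ▸ Set.ssubset_insert hh₂.1.1
    · have hdisj : ({h₁} ∩ {h₂} : Set ℕ) = ∅ :=
        Set.singleton_inter_eq_empty.mpr (Set.notMem_singleton_iff.mpr hne)
      rw [← Set.union_inter_distrib_left, hdisj, Set.union_empty]
  · rintro hsub ⟨T₁, T₂, hT₁, hT₂, hm₁, hm₂, hST₁, hST₂, rfl⟩
    obtain ⟨g₁, hg₁, hg₁T⟩ := hS.exists_mem_nsSGm_of_ssubset_s2 hT₁ hST₁ (hm₁ ▸ hmS)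
    obtain ⟨g₂, hg₂, hg₂T⟩ := hS.exists_mem_nsSGm_of_ssubset_s2 hT₂ hST₂ (hm₂ ▸ hmS)
    rw [hm₁] at hg₁
    rw [hm₂] at hg₂
    exact hg₁.1.1 ⟨hg₁T, hsub hg₁ hg₂ ▸ hg₂T⟩
  · by_contra hne
    have hSO : S ⊂ {0} ∪ {n : ℕ | nsMult S ≤ n} :=
      Set.ssubset_iff_subset_ne.mpr ⟨subset_ordinary S, hne⟩
    obtain ⟨h, hh, -⟩ := hS.exists_mem_nsSGm_of_ssubset_s2 (isNumSgp_ordinary _) hSO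
      ((nsMult_ordinary hmpos).symm ▸ hmS)
    rw [nsMult_ordinary hmpos, hempty] at hh
    exact hh
  · intro hSeq
    refine Set.eq_empty_of_forall_notMem fun h hh => hh.1.1 ?_
    exact hSeq ▸ Or.inr hh.2.le
end

section
/- Let S be a numerical semigroup with multiplicity 3 and Kunz-coordinates vector (x_1, x_2) ∈ ℕ². Then SG_3(S) = ∅ if x = (1,1); SG_3(S) = {3x_1 - 2} if 2x_1 ≥ x_2 + 2, x_1 ≥ 2 and 2x_2 ≤ x_1; SG_3(S) = {3x_2 - 1} if 2x_2 ≥ x_1 + 1, x_2 ≥ 2 and 2x_1 ≤ x_2 + 1; and SG_3(S) = {3x_1 - 2, 3x_2 - 1} if 2x_1 ≥ x_2 + 2, 2x_2 ≥ x_1 + 1 and x_1, x_2 ≥ 2. -/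
/-!
Since `3 ∈ S`, membership in `S` is decided by the residue mod 3 and the Apéry elements
`3 x₁ + 1`, `3 x₂ + 2`. A gap `h` is special iff `2h ∈ S` and `h + s ∈ S` for every nonzero
`s ∈ S`; for `h > 3` the condition `h + 3 ∈ S` forces `h` to be the largest gap of its residue
class, i.e. `3 x₁ - 2` or `3 x₂ - 1`, and `2h ∈ S` then amounts to the stated inequalities.
-/

theorem nsApery_le {S : Set ℕ} {m i s : ℕ} (hs : s ∈ S) (hsi : s % m = i % m) :
    nsApery S m i ≤ s :=
  Nat.sInf_le ⟨hs, hsi⟩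

theorem nsApery_mod (S : Set ℕ) (m i : ℕ) : nsApery S m (i % m) = nsApery S m i := by
  simp only [nsApery, Nat.mod_mod]

namespace IsNumSgp

variable {S : Set ℕ}

theorem exists_forall_gt_mem (hS : IsNumSgp S) : ∃ B, ∀ n, B < n → n ∈ S := by
  obtain ⟨B, hB⟩ := hS.2.2.bddAbove
  exact ⟨B, fun n hn => by_contra fun hnS => absurd (hB hnS) (by omega)⟩

theorem mul_mem (hS : IsNumSgp S) {a : ℕ} (ha : a ∈ S) (k : ℕ) : k * a ∈ S := by
  induction k with
  | zero => simpa using hS.1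
  | succ k ih => simpa [Nat.succ_mul] using hS.2.1 _ ih _ ha

theorem nsMult_mem_s6 (hS : IsNumSgp S) : nsMult S ∈ S := by
  obtain ⟨B, hB⟩ := hS.exists_forall_gt_mem
  exact (Nat.sInf_mem (s := {n | n ∈ S ∧ 0 < n}) ⟨B + 1, hB _ (by omega), by omega⟩).1

theorem nsApery_mem (hS : IsNumSgp S) {m : ℕ} (hm : 0 < m) (i : ℕ) :
    nsApery S m i ∈ S ∧ nsApery S m i % m = i % m := by
  obtain ⟨B, hB⟩ := hS.exists_forall_gt_mem
  refine Nat.sInf_mem (s := {s | s ∈ S ∧ s % m = i % m}) ⟨m * (B + 1) + i % m, hB _ ?_, ?_⟩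
  · have := Nat.le_mul_of_pos_left (B + 1) hm
    omega
  · simp [Nat.add_mod]

theorem mem_iff_nsApery_le (hS : IsNumSgp S) {m : ℕ} (hmS : m ∈ S) (hm : 0 < m) (n : ℕ) :
    n ∈ S ↔ nsApery S m n ≤ n := by
  refine ⟨fun hn => nsApery_le hn rfl, fun hle => ?_⟩
  obtain ⟨hwS, hwmod⟩ := hS.nsApery_mem hm n
  obtain ⟨k, hk⟩ : m ∣ n - nsApery S m n := (Nat.modEq_iff_dvd' hle).1 hwmod
  have hn : n = nsApery S m n + k * m := by rw [mul_comm] at hk; omega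
  exact hn ▸ hS.2.1 _ hwS _ (hS.mul_mem hmS k)

theorem mem_nsSG_iff_s6 (hS : IsNumSgp S) (h : ℕ) :
    h ∈ nsSG S ↔ h ∉ S ∧ h + h ∈ S ∧ ∀ s ∈ S, s ≠ 0 → h + s ∈ S := by
  have hS0 := hS.1
  constructor
  · rintro ⟨hhS, -, hadd, -⟩
    have hh0 : h ≠ 0 := fun h0 => hhS (h0 ▸ hS0)
    have mem_of_ne {a : ℕ} (ha : a ∈ S ∪ {h}) (hah : a ≠ h) : a ∈ S :=
      ha.resolve_right hah
    refine ⟨hhS, mem_of_ne (hadd _ (Or.inr rfl) _ (Or.inr rfl)) (by omega),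
      fun s hs hs0 => mem_of_ne (hadd _ (Or.inr rfl) _ (Or.inl hs)) (by omega)⟩
  · rintro ⟨hhS, hhh, hhs⟩
    refine ⟨hhS, Or.inl hS0, ?_, hS.2.2.subset (Set.compl_subset_compl.2 Set.subset_union_left)⟩
    have shift {s : ℕ} (hs : s ∈ S) : h + s ∈ S ∪ {h} := by
      rcases eq_or_ne s 0 with rfl | hs0
      · exact Or.inr rfl
      · exact Or.inl (hhs s hs hs0)
    rintro a (ha | rfl) b (hb | rfl)
    · exact Or.inl (hS.2.1 a ha b hb)
    · exact add_comm a b ▸ shift ha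
    · exact shift hb
    · exact Or.inl hhh

end IsNumSgp

section MultiplicityThree

variable {S : Set ℕ} {x1 x2 : ℕ}

theorem mem_iff_of_kunz (hS : IsNumSgp S) (h3 : 3 ∈ S)
    (h1 : nsApery S 3 1 = 3 * x1 + 1) (h2 : nsApery S 3 2 = 3 * x2 + 2) (n : ℕ) :
    n ∈ S ↔ n % 3 = 0 ∨ (n % 3 = 1 ∧ 3 * x1 + 1 ≤ n) ∨ (n % 3 = 2 ∧ 3 * x2 + 2 ≤ n) := by
  have h0 : nsApery S 3 0 = 0 := Nat.eq_zero_of_le_zero (nsApery_le hS.1 rfl)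
  rw [hS.mem_iff_nsApery_le h3 three_pos, ← nsApery_mod]
  obtain hn | hn | hn : n % 3 = 0 ∨ n % 3 = 1 ∨ n % 3 = 2 := by omega
  all_goals simp [hn, h0, h1, h2]

theorem mem_nsSGm_three_iff (hS : IsNumSgp S) (h3 : 3 ∈ S)
    (h1 : nsApery S 3 1 = 3 * x1 + 1) (h2 : nsApery S 3 2 = 3 * x2 + 2) (h : ℕ) :
    h ∈ nsSGm 3 S ↔
      (h = 3 * x1 - 2 ∧ 2 ≤ x1 ∧ x2 + 2 ≤ 2 * x1) ∨
        (h = 3 * x2 - 1 ∧ 2 ≤ x2 ∧ x1 + 1 ≤ 2 * x2) := by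
  have memS := mem_iff_of_kunz hS h3 h1 h2
  simp only [nsSGm, Set.mem_ofPred_eq, hS.mem_nsSG_iff_s6, memS]
  constructor
  · rintro ⟨⟨hhS, hhh, hhs⟩, h3lt⟩
    have hshift := hhs 3 (by omega) (by omega)
    omega
  · intro hcase
    exact ⟨⟨by omega, by omega, fun s hs hs0 => by omega⟩, by omega⟩

end MultiplicityThree

/-- description of SG_3(S) in terms of the Kunz coordinates. -/
theorem stmt6 (S : Set ℕ) (x1 x2 : ℕ) (hS : IsNumSgp S) (hm : nsMult S = 3)
    (h1 : nsApery S 3 1 = 3 * x1 + 1) (h2 : nsApery S 3 2 = 3 * x2 + 2) :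
    (x1 = 1 ∧ x2 = 1 → nsSGm 3 S = ∅) ∧
    (2 * x1 ≥ x2 + 2 → x1 ≥ 2 → 2 * x2 ≤ x1 → nsSGm 3 S = {3 * x1 - 2}) ∧
    (2 * x2 ≥ x1 + 1 → x2 ≥ 2 → 2 * x1 ≤ x2 + 1 → nsSGm 3 S = {3 * x2 - 1}) ∧
    (2 * x1 ≥ x2 + 2 → 2 * x2 ≥ x1 + 1 → x1 ≥ 2 → x2 ≥ 2 →
      nsSGm 3 S = {3 * x1 - 2, 3 * x2 - 1}) := by
  have char := mem_nsSGm_three_iff hS (hm ▸ hS.nsMult_mem_s6) h1 h2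
  refine ⟨?_, ?_, ?_, ?_⟩ <;> intros <;> ext h <;>
    simp only [char, Set.mem_empty_iff_false, iff_false, Set.mem_insert_iff,
      Set.mem_singleton_iff] <;>
    omega
end
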